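/- arXiv:2602.11859 — 2 statements merged into one kernel-verified Lean document; each statement's English description precedes it below -/
import Mathlib

section
/- Fix s,t ∈ X_fin. Then the series ∑_{n=0}^∞ |K_{n+1}(s,t) − K_n(s,t)| converges; in particular the limit K_∞(s,t) := lim_{n→∞} K_n(s,t) exists as a finite complex number. -/
/-!
Each increment `K_{n+1} - K_n = Lⁿ (L K - K)` is positive definite, and an off-diagonal entry of a
positive definite kernel is bounded by the mean of the two diagonal entries. Hence
`‖K_{n+1}(s,t) - K_n(s,t)‖ ≤ ((u_{n+1} - u_n)(s) + (u_{n+1} - u_n)(t)) / 2`, whose right-hand side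
telescopes to a bounded sum for `s, t ∈ X_fin`; so the increments are absolutely summable and
`K_n(s,t)` is a Cauchy sequence in `ℂ`.
-/

open Filter Topology
open scoped BigOperators ComplexOrder ENNReal

/-- A kernel `J : X × X → ℂ` is positive definite: every finite Gram sum
`∑ conj (c α) * c β * J (s α) (s β)` is a nonnegative real number
(using the partial order on `ℂ`). -/
def IsPD {X : Type*} (J : X → X → ℂ) : Prop :=
  ∀ (r : ℕ) (c : Fin r → ℂ) (p : Fin r → X),
    0 ≤ ∑ α, ∑ β, (starRingEnd ℂ) (c α) * c β * J (p α) (p β)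

/-- The pullback operator `(LJ)(s,t) = ∑ i, J (φ i s) (φ i t)`. -/
noncomputable def pullback {X : Type*} (m : ℕ) (φ : Fin m → X → X) (J : X → X → ℂ) :
    X → X → ℂ :=
  fun s t => ∑ i, J (φ i s) (φ i t)

/-- For a word `w = i₁⋯iₙ ∈ {1,…,m}ⁿ`, `phiW φ w = φ_{iₙ} ∘ ⋯ ∘ φ_{i₁}`. -/
def phiW {X : Type*} {m : ℕ} (φ : Fin m → X → X) : {n : ℕ} → (Fin n → Fin m) → X → X
  | 0, _, x => x
  | n + 1, w, x => φ (w (Fin.last n)) (phiW φ (fun i => w i.castSucc) x)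

/-- The tower `K₀ = K`, `K_{n+1} = L Kₙ`. -/
noncomputable def tower {X : Type*} (m : ℕ) (φ : Fin m → X → X) (K : X → X → ℂ) :
    ℕ → X → X → ℂ
  | 0 => K
  | n + 1 => pullback m φ (tower m φ K n)

/-- The diagonal `uₙ(s) = Kₙ(s,s)` (a real number, as `Kₙ` is p.d.). -/
noncomputable def diag {X : Type*} (m : ℕ) (φ : Fin m → X → X) (K : X → X → ℂ)
    (n : ℕ) (s : X) : ℝ :=
  (tower m φ K n s s).re

/-- The diagonal increment `a_s(w) = u_{|w|+1}(φ_w s) − u_{|w|}(φ_w s)`. -/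
noncomputable def incr {X : Type*} (m : ℕ) (φ : Fin m → X → X) (K : X → X → ℂ)
    (s : X) {k : ℕ} (w : Fin k → Fin m) : ℝ :=
  diag m φ K (k + 1) (phiW φ w s) - diag m φ K k (phiW φ w s)

/-- The finiteness locus `X_fin = {s : u_∞(s) = lim uₙ(s) < ∞}` (the monotone
sequence `uₙ(s)` has a finite limit). -/
def Xfin {X : Type*} (m : ℕ) (φ : Fin m → X → X) (K : X → X → ℂ) : Set X :=
  {s | ∃ l : ℝ, Filter.Tendsto (fun n => diag m φ K n s) Filter.atTop (nhds l)}

open ComplexConjugate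

theorem Monotone.hasSum_succ_sub {u : ℕ → ℝ} (hu : Monotone u) {l : ℝ}
    (h : Tendsto u atTop (𝓝 l)) : HasSum (fun n => u (n + 1) - u n) (l - u 0) := by
  rw [hasSum_iff_tendsto_nat_of_nonneg fun n => sub_nonneg.2 (hu n.le_succ)]
  simp only [Finset.sum_range_sub]
  exact h.sub_const _

namespace IsPD

variable {X : Type*} {J : X → X → ℂ}

theorem apply_self_nonneg (hJ : IsPD J) (s : X) : 0 ≤ J s s := by
  simpa using hJ 1 ![1] ![s]

theorem apply_self_eq_re (hJ : IsPD J) (s : X) : J s s = (J s s).re :=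
  Complex.eq_re_of_ofReal_le (r := 0) (by exact_mod_cast hJ.apply_self_nonneg s)

theorem apply_swap (hJ : IsPD J) (s t : X) : J t s = conj (J s t) := by
  have gram (z : ℂ) : 0 ≤ J s s + z * J s t + conj z * J t s + conj z * z * J t t := by
    simpa [Fin.sum_univ_two, add_assoc] using hJ 2 ![1, z] ![s, t]
  have hs_im := (Complex.nonneg_iff.1 (hJ.apply_self_nonneg s)).2
  have ht_im := (Complex.nonneg_iff.1 (hJ.apply_self_nonneg t)).2
  have h1_im := (Complex.nonneg_iff.1 (gram 1)).2
  have hI_im := (Complex.nonneg_iff.1 (gram Complex.I)).2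
  simp only [one_mul, map_one, mul_one, Complex.add_im, Complex.conj_I, neg_mul, Complex.I_mul_I,
    neg_neg, Complex.mul_im, Complex.I_re, zero_mul, Complex.I_im, zero_add,
    Complex.neg_im] at h1_im hI_im
  apply Complex.ext <;> simp only [Complex.conj_re, Complex.conj_im] <;> linarith

theorem norm_apply_le (hJ : IsPD J) (s t : X) : ‖J s t‖ ≤ ((J s s).re + (J t t).re) / 2 := by
  have hs := (Complex.nonneg_iff.1 (hJ.apply_self_nonneg s)).1
  have ht := (Complex.nonneg_iff.1 (hJ.apply_self_nonneg t)).1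
  let c : Fin 2 → ℂ := ![(‖J s t‖ : ℂ), -conj (J s t)]
  have gram : ∑ α, ∑ β, conj (c α) * c β * J (![s, t] α) (![s, t] β) =
      ((‖J s t‖ ^ 2 * ((J s s).re + (J t t).re - 2 * ‖J s t‖) : ℝ) : ℂ) := by
    simp only [c, Fin.sum_univ_two, Matrix.cons_val_zero, Matrix.cons_val_one, hJ.apply_swap s t,
      Complex.conj_ofReal, map_neg, Complex.conj_conj]
    rw [hJ.apply_self_eq_re s, hJ.apply_self_eq_re t]
    push_cast
    linear_combination ((J t t).re - 2 * (‖J s t‖ : ℂ)) * Complex.conj_mul' (J s t)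
  have key := hJ 2 c ![s, t]
  rw [gram, Complex.zero_le_real] at key
  rcases (norm_nonneg (J s t)).eq_or_lt with hb | hb
  · rw [← hb]
    linarith
  · linarith [nonneg_of_mul_nonneg_right key (by positivity)]

end IsPD

theorem IsPD.pullback {X : Type*} {J : X → X → ℂ} (hJ : IsPD J) (m : ℕ) (φ : Fin m → X → X) :
    IsPD (_root_.pullback m φ J) := by
  intro r c p
  simp only [_root_.pullback, Finset.mul_sum]
  rw [Finset.sum_congr rfl fun _ _ => Finset.sum_comm, Finset.sum_comm]
  exact Finset.sum_nonneg fun i _ => hJ r c (φ i ∘ p)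

theorem pullback_sub {X : Type*} (m : ℕ) (φ : Fin m → X → X) (J J' : X → X → ℂ) :
    pullback m φ (fun s t => J s t - J' s t) =
      fun s t => pullback m φ J s t - pullback m φ J' s t := by
  funext s t
  exact Finset.sum_sub_distrib ..

section Tower

variable {X : Type*} {m : ℕ} {φ : Fin m → X → X} {K : X → X → ℂ}

theorem isPD_tower_succ_sub (hsub : IsPD (fun s t => pullback m φ K s t - K s t)) (n : ℕ) :
    IsPD (fun s t => tower m φ K (n + 1) s t - tower m φ K n s t) := by
  induction n with
  | zero => exact hsub
  | succ n ih =>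
    have h := ih.pullback m φ
    rwa [pullback_sub] at h

theorem diag_succ_sub (n : ℕ) (s : X) :
    diag m φ K (n + 1) s - diag m φ K n s = (tower m φ K (n + 1) s s - tower m φ K n s s).re :=
  (Complex.sub_re ..).symm

theorem monotone_diag (hsub : IsPD (fun s t => pullback m φ K s t - K s t)) (s : X) :
    Monotone (diag m φ K · s) :=
  monotone_nat_of_le_succ fun n => sub_nonneg.1 <| by
    rw [diag_succ_sub]
    exact (Complex.nonneg_iff.1 ((isPD_tower_succ_sub hsub n).apply_self_nonneg s)).1

theorem norm_tower_succ_sub_le (hsub : IsPD (fun s t => pullback m φ K s t - K s t)) (n : ℕ)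
    (s t : X) : ‖tower m φ K (n + 1) s t - tower m φ K n s t‖ ≤
      ((diag m φ K (n + 1) s - diag m φ K n s) + (diag m φ K (n + 1) t - diag m φ K n t)) / 2 := by
  rw [diag_succ_sub, diag_succ_sub]
  exact (isPD_tower_succ_sub hsub n).norm_apply_le s t

theorem summable_diag_succ_sub (hsub : IsPD (fun s t => pullback m φ K s t - K s t)) {s : X}
    (hs : s ∈ Xfin m φ K) : Summable fun n => diag m φ K (n + 1) s - diag m φ K n s :=
  have ⟨_, hl⟩ := hs
  ((monotone_diag hsub s).hasSum_succ_sub hl).summable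

end Tower

theorem stmt6_general {X : Type*} (m : ℕ) (φ : Fin m → X → X)
    (K : X → X → ℂ)
    (hsub : IsPD (fun s t => pullback m φ K s t - K s t))
    (s t : X) (hs : s ∈ Xfin m φ K) (ht : t ∈ Xfin m φ K) :
    Summable (fun n : ℕ => ‖tower m φ K (n + 1) s t - tower m φ K n s t‖) ∧
    ∃ l : ℂ, Tendsto (fun n => tower m φ K n s t) atTop (𝓝 l) := by
  have habs : Summable fun n => ‖tower m φ K (n + 1) s t - tower m φ K n s t‖ :=
    .of_nonneg_of_le (fun _ => norm_nonneg _) (norm_tower_succ_sub_le hsub · s t)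
      (((summable_diag_succ_sub hsub hs).add (summable_diag_succ_sub hsub ht)).div_const 2)
  refine ⟨habs, cauchySeq_tendsto_of_complete (cauchySeq_of_summable_dist ?_)⟩
  simpa only [dist_eq_norm'] using habs

/-- For `s, t ∈ X_fin`, the series of absolute increments of `Kₙ(s,t)` converges;
in particular `K_∞(s,t) = lim Kₙ(s,t)` exists in `ℂ`. -/
theorem stmt6 {X : Type*} (m : ℕ) (hm : 1 ≤ m) (φ : Fin m → X → X)
    (K : X → X → ℂ) (hK : IsPD K)
    (hsub : IsPD (fun s t => pullback m φ K s t - K s t))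
    (s t : X) (hs : s ∈ Xfin m φ K) (ht : t ∈ Xfin m φ K) :
    Summable (fun n : ℕ => ‖tower m φ K (n + 1) s t - tower m φ K n s t‖) ∧
    ∃ l : ℂ, Tendsto (fun n => tower m φ K n s t) atTop (𝓝 l) :=
  stmt6_general m φ K hsub s t hs ht
end

section
/- Fix s,t ∈ Y. Then the process (M_n(s,t;·))_{n≥0} is a complex-valued martingale on (Ω,μ) with respect to the filtration (F_n): each M_n(s,t;·) is F_n-measurable and integrable with E[M_{n+1}(s,t;·) | F_n] = M_n(s,t;·). Moreover, ∫_Ω M_n(s,t;ω) dμ(ω) = J(s,t) for every n ≥ 0. -/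
open MeasureTheory Filter Topology
open scoped BigOperators ComplexOrder ENNReal

/-- Positive definiteness of a kernel restricted to a subset `Y ⊆ X`: every finite
Gram matrix at points of `Y` is positive semidefinite. -/
def IsPDOn {X : Type*} (Y : Set X) (J : X → X → ℂ) : Prop :=
  ∀ (r : ℕ) (c : Fin r → ℂ) (p : Fin r → X), (∀ α, p α ∈ Y) →
    0 ≤ ∑ α, ∑ β, (starRingEnd ℂ) (c α) * c β * J (p α) (p β)

/-- The sampled process `Mₙ(s,t;ω) = mⁿ J(φ_{ω|n}(s), φ_{ω|n}(t))`. -/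
noncomputable def Mart {X : Type*} (m : ℕ) (φ : Fin m → X → X) (J : X → X → ℂ)
    (s t : X) (n : ℕ) (ω : ℕ → Fin m) : ℂ :=
  (m : ℂ) ^ n *
    J (phiW φ (fun i : Fin n => ω (i : ℕ)) s) (phiW φ (fun i : Fin n => ω (i : ℕ)) t)

/-- The σ-algebra `Fₙ` on `Ω = {1,…,m}^ℕ` generated by the first `n` coordinates. -/
def Filt (m n : ℕ) : MeasurableSpace (ℕ → Fin m) :=
  MeasurableSpace.comap (fun ω => (fun i : Fin n => ω (i : ℕ))) inferInstance

/-!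
`Mₙ(s,t;·)` is constant on each cylinder `{ω | ω|n = w}`, and every such cylinder has
mass `m⁻ⁿ`, so integrals over sets of `Fₙ` are finite sums over words. Splitting a word of
length `n + 1` into a word `w` of length `n` and a last letter `j`, the invariance `LJ = J`
at the points `φ_w(s), φ_w(t) ∈ Y` gives `∑ⱼ M_{n+1}(wj) = m · Mₙ(w)`, which is exactly
`∫_A M_{n+1} = ∫_A Mₙ` for `A ∈ Fₙ`. Taking `A = Ω` and `M₀ = J(s,t)` gives the
expectation.
-/

section Words

variable {X : Type*} {m : ℕ} (φ : Fin m → X → X)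

lemma phiW_snoc {n : ℕ} (w : Fin n → Fin m) (j : Fin m) (x : X) :
    phiW φ (Fin.snoc w j) x = φ j (phiW φ w x) := by
  simp only [phiW, Fin.snoc_last, Fin.snoc_castSucc]

lemma phiW_mem {Y : Set X} (hY : ∀ i : Fin m, ∀ x ∈ Y, φ i x ∈ Y) :
    ∀ {n : ℕ} (w : Fin n → Fin m) {x : X}, x ∈ Y → phiW φ w x ∈ Y
  | 0, _, _, hx => hx
  | _ + 1, _, _, hx => hY _ _ (phiW_mem hY _ hx)

end Words

lemma Fin.sum_univ_pi_snoc {α M : Type*} [Fintype α] [AddCommMonoid M] {n : ℕ}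
    (f : (Fin (n + 1) → α) → M) :
    ∑ w, f w = ∑ w : Fin n → α, ∑ j, f (Fin.snoc w j) := by
  rw [← (Fin.snocEquiv fun _ => α).sum_comp, Fintype.sum_prod_type_right]
  rfl

lemma integral_comp_eq_sum_measureReal_preimage {α β E : Type*} [MeasurableSpace α]
    [MeasurableSpace β] [Fintype β] [MeasurableSingletonClass β] [NormedAddCommGroup E]
    [NormedSpace ℝ E] [CompleteSpace E] {μ : Measure α} [IsFiniteMeasure μ] {π : α → β}
    (hπ : Measurable π) (F : β → E) :
    ∫ a, F (π a) ∂μ = ∑ b, μ.real (π ⁻¹' {b}) • F b := by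
  rw [← integral_map hπ.aemeasurable StronglyMeasurable.of_discrete.aestronglyMeasurable,
    integral_fintype .of_finite]
  simp only [map_measureReal_apply hπ (measurableSet_singleton _)]

section Prefixes

variable {m : ℕ}

/-- `prefixWord m n ω = ω|n`. -/
def prefixWord (m n : ℕ) (ω : ℕ → Fin m) : Fin n → Fin m := fun i => ω i

lemma measurable_prefixWord (n : ℕ) : Measurable (prefixWord m n) :=
  measurable_pi_lambda _ fun _ => measurable_pi_apply _

lemma preimage_prefixWord_singleton (n : ℕ) (w : Fin n → Fin m) :
    prefixWord m n ⁻¹' {w} = {ω | ∀ i : Fin n, ω (i : ℕ) = w i} := by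
  ext ω
  simp [prefixWord, funext_iff]

lemma setIntegral_comp_prefixWord {E : Type*} [NormedAddCommGroup E] [NormedSpace ℝ E]
    [CompleteSpace E] {μ : Measure (ℕ → Fin m)} [IsFiniteMeasure μ]
    (hcyl : ∀ (n : ℕ) (w : Fin n → Fin m),
      μ {ω | ∀ i : Fin n, ω (i : ℕ) = w i} = ((m : ℝ≥0∞))⁻¹ ^ n)
    (n : ℕ) (F : (Fin n → Fin m) → E) (S : Set (Fin n → Fin m)) :
    ∫ ω in prefixWord m n ⁻¹' S, F (prefixWord m n ω) ∂μ
      = ((m : ℝ) ^ n)⁻¹ • ∑ w, S.indicator F w := by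
  have hind : (prefixWord m n ⁻¹' S).indicator (fun ω => F (prefixWord m n ω))
      = fun ω => S.indicator F (prefixWord m n ω) :=
    funext fun _ => Set.indicator_comp_right _
  rw [← integral_indicator (measurable_prefixWord n (.of_discrete)), hind,
    integral_comp_eq_sum_measureReal_preimage (measurable_prefixWord n), Finset.smul_sum]
  congr! 2 with w
  simp [measureReal_def, preimage_prefixWord_singleton, hcyl]

end Prefixes

section Martingale

variable {X : Type*} {m : ℕ} (φ : Fin m → X → X) (J : X → X → ℂ) (s t : X)

noncomputable def cylinderValue {n : ℕ} (w : Fin n → Fin m) : ℂ :=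
  (m : ℂ) ^ n * J (phiW φ w s) (phiW φ w t)

lemma mart_eq_cylinderValue_comp (n : ℕ) :
    Mart m φ J s t n = fun ω => cylinderValue φ J s t (prefixWord m n ω) := rfl

lemma sum_cylinderValue_snoc {Y : Set X} (hY : ∀ i : Fin m, ∀ x ∈ Y, φ i x ∈ Y)
    (hJinv : ∀ u ∈ Y, ∀ v ∈ Y, ∑ i : Fin m, J (φ i u) (φ i v) = J u v)
    (hs : s ∈ Y) (ht : t ∈ Y) {n : ℕ} (w : Fin n → Fin m) :
    ∑ j, cylinderValue φ J s t (Fin.snoc w j) = (m : ℝ) • cylinderValue φ J s t w := by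
  simp only [cylinderValue, phiW_snoc, ← Finset.mul_sum,
    hJinv _ (phiW_mem φ hY w hs) _ (phiW_mem φ hY w ht), Complex.real_smul]
  push_cast
  ring

lemma stronglyMeasurable_mart (n : ℕ) : StronglyMeasurable[Filt m n] (Mart m φ J s t n) :=
  (StronglyMeasurable.of_discrete (f := cylinderValue φ J s t (n := n))).comp_measurable
    (comap_measurable (prefixWord m n))

lemma integrable_mart (n : ℕ) (μ : Measure (ℕ → Fin m)) [IsFiniteMeasure μ] :
    Integrable (Mart m φ J s t n) μ :=
  (Integrable.of_finite (f := cylinderValue φ J s t (n := n))).comp_measurable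
    (measurable_prefixWord n)

variable {Y : Set X} (hm : m ≠ 0) (hY : ∀ i : Fin m, ∀ x ∈ Y, φ i x ∈ Y)
  (hJinv : ∀ u ∈ Y, ∀ v ∈ Y, ∑ i : Fin m, J (φ i u) (φ i v) = J u v)
  (hs : s ∈ Y) (ht : t ∈ Y) {μ : Measure (ℕ → Fin m)}
  (hcyl : ∀ (n : ℕ) (w : Fin n → Fin m),
    μ {ω | ∀ i : Fin n, ω (i : ℕ) = w i} = ((m : ℝ≥0∞))⁻¹ ^ n)
include hm hY hJinv hs ht hcyl

lemma setIntegral_mart_succ [IsFiniteMeasure μ] (n : ℕ) (S : Set (Fin n → Fin m)) :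
    ∫ ω in prefixWord m n ⁻¹' S, Mart m φ J s t (n + 1) ω ∂μ
      = ∫ ω in prefixWord m n ⁻¹' S, Mart m φ J s t n ω ∂μ := by
  have hS : prefixWord m n ⁻¹' S = prefixWord m (n + 1) ⁻¹' (Fin.init ⁻¹' S) := rfl
  have hsum : ∀ w : Fin n → Fin m,
      ∑ j, (Fin.init ⁻¹' S).indicator (cylinderValue φ J s t) (Fin.snoc w j)
        = (m : ℝ) • S.indicator (cylinderValue φ J s t) w := by
    intro w
    by_cases hw : w ∈ S
    · simp [hw, sum_cylinderValue_snoc φ J s t hY hJinv hs ht]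
    · simp [hw]
  rw [mart_eq_cylinderValue_comp, mart_eq_cylinderValue_comp]
  conv_lhs => rw [hS]
  rw [setIntegral_comp_prefixWord hcyl, setIntegral_comp_prefixWord hcyl,
    Fin.sum_univ_pi_snoc]
  simp only [hsum, ← Finset.smul_sum, smul_smul]
  congr 1
  field_simp
  ring

lemma condExp_mart_succ [IsFiniteMeasure μ] (n : ℕ) :
    μ[Mart m φ J s t (n + 1)|Filt m n] =ᵐ[μ] Mart m φ J s t n := by
  refine (ae_eq_condExp_of_forall_setIntegral_eq (measurable_prefixWord n).comap_le
    (integrable_mart φ J s t _ μ) (fun _ _ _ => (integrable_mart φ J s t n μ).integrableOn)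
    ?_ (stronglyMeasurable_mart φ J s t n).aestronglyMeasurable).symm
  rintro _ ⟨S, -, rfl⟩ -
  exact (setIntegral_mart_succ φ J s t hm hY hJinv hs ht hcyl n S).symm

lemma integral_mart [IsProbabilityMeasure μ] :
    ∀ n : ℕ, ∫ ω, Mart m φ J s t n ω ∂μ = J s t
  | 0 => by simp [Mart, phiW]
  | n + 1 => by
    have h := setIntegral_mart_succ φ J s t hm hY hJinv hs ht hcyl n Set.univ
    rw [Set.preimage_univ, Measure.restrict_univ] at h
    rw [h, integral_mart n]

end Martingale

theorem stmt12_general {X : Type*} (m : ℕ) (hm : 1 ≤ m) (φ : Fin m → X → X)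
    (Y : Set X) (hY : ∀ i : Fin m, ∀ x ∈ Y, φ i x ∈ Y)
    (J : X → X → ℂ)
    (hJinv : ∀ s ∈ Y, ∀ t ∈ Y, ∑ i : Fin m, J (φ i s) (φ i t) = J s t)
    (μ : Measure (ℕ → Fin m)) (hprob : IsProbabilityMeasure μ)
    (hcyl : ∀ (n : ℕ) (w : Fin n → Fin m),
      μ {ω | ∀ i : Fin n, ω (i : ℕ) = w i} = ((m : ℝ≥0∞))⁻¹ ^ n)
    (s t : X) (hs : s ∈ Y) (ht : t ∈ Y) :
    (∀ n : ℕ, StronglyMeasurable[Filt m n] (Mart m φ J s t n)) ∧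
    (∀ n : ℕ, Integrable (Mart m φ J s t n) μ) ∧
    (∀ n : ℕ, μ[Mart m φ J s t (n + 1)|Filt m n] =ᵐ[μ] Mart m φ J s t n) ∧
    (∀ n : ℕ, ∫ ω, Mart m φ J s t n ω ∂μ = J s t) := by
  have hm0 : m ≠ 0 := Nat.one_le_iff_ne_zero.mp hm
  exact ⟨stronglyMeasurable_mart φ J s t, fun n => integrable_mart φ J s t n μ,
    condExp_mart_succ φ J s t hm0 hY hJinv hs ht hcyl,
    integral_mart φ J s t hm0 hY hJinv hs ht hcyl⟩

/-- `(Mₙ(s,t;·))ₙ` is a complex-valued martingale for the coordinate filtration, with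
constant expectation `J(s,t)`. -/
theorem stmt12 {X : Type*} (m : ℕ) (hm : 1 ≤ m) (φ : Fin m → X → X)
    (Y : Set X) (hY : ∀ i : Fin m, ∀ x ∈ Y, φ i x ∈ Y)
    (J : X → X → ℂ) (hJpd : IsPDOn Y J)
    (hJinv : ∀ s ∈ Y, ∀ t ∈ Y, ∑ i : Fin m, J (φ i s) (φ i t) = J s t)
    (μ : Measure (ℕ → Fin m)) (hprob : IsProbabilityMeasure μ)
    (hcyl : ∀ (n : ℕ) (w : Fin n → Fin m),
      μ {ω | ∀ i : Fin n, ω (i : ℕ) = w i} = ((m : ℝ≥0∞))⁻¹ ^ n)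
    (s t : X) (hs : s ∈ Y) (ht : t ∈ Y) :
    (∀ n : ℕ, StronglyMeasurable[Filt m n] (Mart m φ J s t n)) ∧
    (∀ n : ℕ, Integrable (Mart m φ J s t n) μ) ∧
    (∀ n : ℕ, μ[Mart m φ J s t (n + 1)|Filt m n] =ᵐ[μ] Mart m φ J s t n) ∧
    (∀ n : ℕ, ∫ ω, Mart m φ J s t n ω ∂μ = J s t) :=
  stmt12_general m hm φ Y hY J hJinv μ hprob hcyl s t hs ht
end
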